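/- For every QCSP there exists a compatible QCSP base, i.e., a QCSP base whose interpretation (a QCSP on table constraints) has exactly the same set of winning strategies as the original QCSP. -/

import Mathlib

/-- A strategy tree for a binder: `false` = existential, `true` = universal. -/
inductive Strat {V : Type} : List (Bool × Finset V) → Type
  | leaf : Strat []
  | exist {D : Finset V} {rest : List (Bool × Finset V)} (d : V) (hd : d ∈ D)
      (s : Strat rest) : Strat ((false, D) :: rest)
  | univ {D : Finset V} {rest : List (Bool × Finset V)}
      (f : ∀ d ∈ D, Strat rest) : Strat ((true, D) :: rest)

/-- The set of scenarios (root-to-leaf label sequences) of a strategy. -/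
def scenariosF {V : Type} [DecidableEq V] : {b : List (Bool × Finset V)} → Strat b → Finset (List V)
  | _, .leaf => {[]}
  | _, .exist d _ s => (scenariosF s).image (d :: ·)
  | _, .univ (D := D) f => D.attach.biUnion fun d => (scenariosF (f d.1 d.2)).image (d.1 :: ·)

/-- A strategy is winning if all its scenarios satisfy all the constraints. -/
def Winning {V : Type} [DecidableEq V] {b : List (Bool × Finset V)}
    (C : Set (List V → Prop)) (s : Strat b) : Prop :=
  ∀ sc ∈ scenariosF s, ∀ c ∈ C, c sc

/-- The QCSP with binder `b` and constraints `C` admits a winning strategy. -/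
def AdmitsWinning {V : Type} [DecidableEq V] (b : List (Bool × Finset V))
    (C : Set (List V → Prop)) : Prop :=
  ∃ s : Strat b, Winning C s

/-- Constraints obtained by fixing the value of the leading variable to `val`. -/
def shiftC {V : Type} (val : V) (C : Set (List V → Prop)) : Set (List V → Prop) :=
  (fun c => fun l => c (val :: l)) '' C

/-- A guard tree over a list of domains: leaves □ at uniform depth, internal
nodes branch on a nonempty subset `S` of the domain, with one subtree per
element of `S` (so children form a partial function from domain values to
subtrees, and trees are identified up to reordering of children). -/
inductive GTree {V : Type} : List (Finset V) → Type
  | box : GTree []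
  | node {D : Finset V} {rest : List (Finset V)}
      (S : Finset V) (hS : S ⊆ D) (hne : S.Nonempty)
      (children : ∀ d ∈ S, GTree rest) : GTree (D :: rest)

/-- The set of branches (edge-label sequences from root to leaf) of a guard tree. -/
def branchesG {V : Type} : {ds : List (Finset V)} → GTree ds → Set (List V)
  | _, .box => {[]}
  | _, .node S _ _ ch =>
      {l | ∃ d, ∃ hd : d ∈ S, ∃ t ∈ branchesG (ch d hd), l = d :: t}

/-- The interpretation of a guard `(val, T)` as a set of tuples. -/
def IntG {V : Type} {ds : List (Finset V)} (val : V) (T : GTree ds) : Set (List V) :=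
  (val :: ·) '' branchesG T

/-- The number of leaves of a guard tree. -/
def leavesG {V : Type} : {ds : List (Finset V)} → GTree ds → ℕ
  | _, .box => 1
  | _, .node S _ _ ch => ∑ d ∈ S.attach, leavesG (ch d.1 d.2)

/-- The list of domains of the first `k` variables of a binder. -/
def tdoms {V : Type} (b : List (Bool × Finset V)) (k : ℕ) : List (Finset V) :=
  (b.take k).map Prod.snd

/-- A QCSP base over a binder `b`: either ⊤, ⊥, or one nonempty guard set per
existentially quantified variable, a guard for the k-th variable being a pair
of a domain value and a tree over the domains of the preceding variables. -/
inductive QBase (V : Type) (b : List (Bool × Finset V)) : Type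
  | top : QBase V b
  | bot : QBase V b
  | guards (G : ∀ k : Fin b.length, (b.get k).1 = false → Set (V × GTree (tdoms b k.1)))
      (hne : ∀ k h, (G k h).Nonempty)
      (hdom : ∀ k h, ∀ p ∈ G k h, p.1 ∈ (b.get k).2) : QBase V b

/-- The table constraints interpreting a guard family: for each existential
position k, the tuple (v_k, v_1, ..., v_{k-1}) must belong to the union of
the interpretations of the guards of v_k. -/
def tableC {V : Type} (b : List (Bool × Finset V))
    (G : ∀ k : Fin b.length, (b.get k).1 = false → Set (V × GTree (tdoms b k.1))) :
    Set (List V → Prop) :=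
  {c | ∃ k : Fin b.length, ∃ h : (b.get k).1 = false,
    c = fun l => ∃ v, l[k.1]? = some v ∧ (v :: l.take k.1) ∈ ⋃ p ∈ G k h, IntG p.1 p.2}

/-- A strategy is winning for (the interpretation of) a QCSP base. -/
def BaseWinning {V : Type} [DecidableEq V] {b : List (Bool × Finset V)} :
    QBase V b → Strat b → Prop
  | .top, _ => True
  | .bot, _ => False
  | .guards G _ _, s => Winning (tableC b G) s

/-- A QCSP base is compatible with a QCSP if its interpretation has exactly
the same winning strategies. -/
def Compatible {V : Type} [DecidableEq V] {b : List (Bool × Finset V)}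
    (B : QBase V b) (C : Set (List V → Prop)) : Prop :=
  ∀ s : Strat b, BaseWinning B s ↔ Winning C s

section Aux

variable {V : Type} [DecidableEq V]

lemma mem_shiftC {d : V} {C : Set (List V → Prop)} {c : List V → Prop} :
    c ∈ shiftC d C ↔ ∃ c₀ ∈ C, c = fun l => c₀ (d :: l) := by
  simp [shiftC, Set.mem_image, eq_comm]

lemma winning_exist {D : Finset V} {rest : List (Bool × Finset V)} {C : Set (List V → Prop)}
    (d : V) (hd : d ∈ D) (s : Strat rest) :
    Winning C (.exist d hd s) ↔ Winning (shiftC d C) s := by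
  constructor
  · intro h sc hsc c hc
    obtain ⟨c₀, hc₀, rfl⟩ := mem_shiftC.mp hc
    exact h (d :: sc) (by simp only [scenariosF, Finset.mem_image]; exact ⟨sc, hsc, rfl⟩) c₀ hc₀
  · intro h sc hsc c hc
    simp only [scenariosF, Finset.mem_image] at hsc
    obtain ⟨t, ht, rfl⟩ := hsc
    exact h t ht _ (mem_shiftC.mpr ⟨c, hc, rfl⟩)

lemma winning_univ {D : Finset V} {rest : List (Bool × Finset V)} {C : Set (List V → Prop)}
    (f : ∀ d ∈ D, Strat rest) :
    Winning C (.univ f) ↔ ∀ d (hd : d ∈ D), Winning (shiftC d C) (f d hd) := by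
  constructor
  · intro h d hd sc hsc c hc
    obtain ⟨c₀, hc₀, rfl⟩ := mem_shiftC.mp hc
    refine h (d :: sc) ?_ c₀ hc₀
    simp only [scenariosF, Finset.mem_biUnion, Finset.mem_image]
    exact ⟨⟨d, hd⟩, Finset.mem_attach _ _, sc, hsc, rfl⟩
  · intro h sc hsc c hc
    simp only [scenariosF, Finset.mem_biUnion, Finset.mem_image] at hsc
    obtain ⟨⟨d, hd⟩, -, t, ht, rfl⟩ := hsc
    exact h d hd t ht _ (mem_shiftC.mpr ⟨c, hc, rfl⟩)

/-- The "goodness" predicate for a (partial) scenario prefix. -/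
def Pre : List (Bool × Finset V) → Set (List V → Prop) → List V → Prop
  | _, _, [] => True
  | [], _, _ :: _ => False
  | (q, D) :: rest, C, d :: p =>
      d ∈ D ∧ (q = false → AdmitsWinning rest (shiftC d C)) ∧ Pre rest (shiftC d C) p

@[simp] lemma pre_nil : ∀ (b : List (Bool × Finset V)) (C : Set (List V → Prop)), Pre b C []
  | [], _ => trivial
  | (q, D) :: rest, _ => trivial

lemma pre_cons {q : Bool} {D : Finset V} {rest : List (Bool × Finset V)}
    {C : Set (List V → Prop)} {d : V} {p : List V} :
    Pre ((q, D) :: rest) C (d :: p) ↔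
      d ∈ D ∧ (q = false → AdmitsWinning rest (shiftC d C)) ∧ Pre rest (shiftC d C) p :=
  Iff.rfl

lemma winning_iff_pre : ∀ {b : List (Bool × Finset V)} (s : Strat b) (C : Set (List V → Prop)),
    AdmitsWinning b C → ((∀ l ∈ scenariosF s, Pre b C l) ↔ Winning C s) := by
  intro b s
  induction s with
  | leaf =>
    intro C hA
    obtain ⟨s₀, hw⟩ := hA
    cases s₀
    constructor
    · intro _ sc hsc c hc
      simp only [scenariosF, Finset.mem_singleton] at hsc
      subst hsc
      exact hw [] (by simp [scenariosF]) c hc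
    · intro _ l hl
      simp only [scenariosF, Finset.mem_singleton] at hl
      subst hl
      exact pre_nil _ _
  | exist d hd s ih =>
    intro C hA
    rw [winning_exist]
    constructor
    · intro h
      rcases (scenariosF s).eq_empty_or_nonempty with he | ⟨l, hl⟩
      · intro sc hsc _ _
        rw [he] at hsc; simp at hsc
      · have hPre := h (d :: l) (by simp only [scenariosF, Finset.mem_image]; exact ⟨l, hl, rfl⟩)
        have hA' : AdmitsWinning _ (shiftC d C) := (pre_cons.mp hPre).2.1 rfl
        refine (ih _ hA').mp ?_
        intro l' hl'
        exact (pre_cons.mp (h (d :: l')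
          (by simp only [scenariosF, Finset.mem_image]; exact ⟨l', hl', rfl⟩))).2.2
    · intro hw l hl
      simp only [scenariosF, Finset.mem_image] at hl
      obtain ⟨t, ht, rfl⟩ := hl
      exact pre_cons.mpr ⟨hd, fun _ => ⟨s, hw⟩, (ih _ ⟨s, hw⟩).mpr hw t ht⟩
  | @univ D rest f ih =>
    intro C hA
    have hAd : ∀ d (hd : d ∈ D), AdmitsWinning rest (shiftC d C) := by
      obtain ⟨s₀, hw⟩ := hA
      cases s₀ with
      | univ f₀ => exact fun d hd => ⟨f₀ d hd, (winning_univ f₀).mp hw d hd⟩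
    rw [winning_univ]
    constructor
    · intro h d hd
      refine (ih d hd _ (hAd d hd)).mp ?_
      intro l hl
      have := h (d :: l) (by
        simp only [scenariosF, Finset.mem_biUnion, Finset.mem_image]
        exact ⟨⟨d, hd⟩, Finset.mem_attach _ _, l, hl, rfl⟩)
      exact (pre_cons.mp this).2.2
    · intro hw l hl
      simp only [scenariosF, Finset.mem_biUnion, Finset.mem_image] at hl
      obtain ⟨⟨d, hd⟩, -, t, ht, rfl⟩ := hl
      exact pre_cons.mpr ⟨hd, fun _ => ⟨f d hd, hw d hd⟩,
        (ih d hd _ (hAd d hd)).mpr (hw d hd) t ht⟩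

lemma scenario_forall2 : ∀ {b : List (Bool × Finset V)} (s : Strat b),
    ∀ l ∈ scenariosF s, List.Forall₂ (fun d (p : Bool × Finset V) => d ∈ p.2) l b := by
  intro b s
  induction s with
  | leaf =>
    intro l hl
    simp only [scenariosF, Finset.mem_singleton] at hl
    subst hl; exact List.Forall₂.nil
  | exist d hd s ih =>
    intro l hl
    simp only [scenariosF, Finset.mem_image] at hl
    obtain ⟨t, ht, rfl⟩ := hl
    exact List.Forall₂.cons hd (ih t ht)
  | univ f ih =>
    intro l hl
    simp only [scenariosF, Finset.mem_biUnion, Finset.mem_image] at hl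
    obtain ⟨⟨d, hd⟩, -, t, ht, rfl⟩ := hl
    exact List.Forall₂.cons hd (ih d hd t ht)

lemma scenarios_empty : ∀ {b : List (Bool × Finset V)} (s : Strat b),
    (true, (∅ : Finset V)) ∈ b → scenariosF s = ∅ := by
  intro b s
  induction s with
  | leaf => intro h; simp at h
  | exist d hd s ih =>
    intro h
    rcases List.mem_cons.mp h with h | h
    · exact Bool.noConfusion (congrArg Prod.fst h)
    · simp [scenariosF, ih h]
  | @univ D rest f ih =>
    intro h
    rcases List.mem_cons.mp h with h | h
    · have hD : D = (∅ : Finset V) := (congrArg Prod.snd h).symm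
      subst hD
      simp [scenariosF]
    · simp only [scenariosF]
      rw [Finset.eq_empty_iff_forall_notMem]
      intro x hx
      simp only [Finset.mem_biUnion, Finset.mem_image] at hx
      obtain ⟨⟨d, hd⟩, -, t, ht, rfl⟩ := hx
      rw [ih d hd h] at ht
      simp at ht

lemma exists_path_tree : ∀ {ds : List (Finset V)} {p : List V},
    List.Forall₂ (· ∈ ·) p ds → ∃ T : GTree ds, branchesG T = {p} := by
  intro ds p h
  induction h with
  | nil => exact ⟨.box, rfl⟩
  | @cons d D p' ds' hd _ ih =>
    obtain ⟨T, hT⟩ := ih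
    refine ⟨.node {d} (Finset.singleton_subset_iff.mpr hd) (Finset.singleton_nonempty d)
      (fun _ _ => T), ?_⟩
    ext l
    simp only [branchesG, hT, Set.mem_setOf_eq, Finset.mem_singleton, Set.mem_singleton_iff]
    constructor
    · rintro ⟨e, rfl, t, rfl, rfl⟩; rfl
    · rintro rfl; exact ⟨d, rfl, p', rfl, rfl⟩

@[simp] lemma tdoms_zero (b : List (Bool × Finset V)) : tdoms b 0 = [] := rfl

@[simp] lemma tdoms_cons (x : Bool × Finset V) (b : List (Bool × Finset V)) (k : ℕ) :
    tdoms (x :: b) (k + 1) = x.2 :: tdoms b k := rfl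

lemma pre_concat : ∀ {pre : List V} {b : List (Bool × Finset V)} {C : Set (List V → Prop)} {v : V},
    Pre b C (pre ++ [v]) →
    List.Forall₂ (fun (d : V) (D : Finset V) => d ∈ D) pre (tdoms b pre.length) ∧
    ∃ h : pre.length < b.length, v ∈ (b.get ⟨pre.length, h⟩).2 := by
  intro pre
  induction pre with
  | nil =>
    intro b C v h
    match b, h with
    | (q, D) :: rest, h =>
      exact ⟨List.Forall₂.nil, Nat.succ_pos _, (pre_cons.mp h).1⟩
  | cons d pre ih =>
    intro b C v h
    match b, h with
    | (q, D) :: rest, h =>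
      obtain ⟨hF, hlt, hv⟩ := ih (pre_cons.mp h).2.2
      exact ⟨List.Forall₂.cons (pre_cons.mp h).1 hF, Nat.succ_lt_succ hlt, hv⟩

lemma exists_pre (k : ℕ) : ∀ (b : List (Bool × Finset V)) (C : Set (List V → Prop)),
    k ≤ b.length → (∀ D : Finset V, (true, D) ∈ b → D.Nonempty) → AdmitsWinning b C →
    ∃ p : List V, p.length = k ∧ Pre b C p := by
  induction k with
  | zero => exact fun b C _ _ _ => ⟨[], rfl, pre_nil b C⟩
  | succ n ih =>
    intro b C hk hU hA
    match b with
    | [] => simp at hk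
    | (q, D) :: rest =>
      obtain ⟨s₀, hw⟩ := hA
      cases q with
      | false =>
        cases s₀ with
        | exist d hd s' =>
          have hA' : AdmitsWinning rest (shiftC d C) := ⟨s', (winning_exist d hd s').mp hw⟩
          obtain ⟨p, hp, hPre⟩ := ih rest (shiftC d C) (Nat.succ_le_succ_iff.mp hk)
            (fun D' hD' => hU D' (List.mem_cons_of_mem _ hD')) hA'
          exact ⟨d :: p, by simp [hp], pre_cons.mpr ⟨hd, fun _ => hA', hPre⟩⟩
      | true =>
        obtain ⟨d, hd⟩ := hU D List.mem_cons_self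
        cases s₀ with
        | univ f =>
          have hA' : AdmitsWinning rest (shiftC d C) := ⟨f d hd, (winning_univ f).mp hw d hd⟩
          obtain ⟨p, hp, hPre⟩ := ih rest (shiftC d C) (Nat.succ_le_succ_iff.mp hk)
            (fun D' hD' => hU D' (List.mem_cons_of_mem _ hD')) hA'
          exact ⟨d :: p, by simp [hp], pre_cons.mpr ⟨hd, fun h => Bool.noConfusion h, hPre⟩⟩

lemma pre_iff_forall : ∀ {l : List V} {b : List (Bool × Finset V)} (C : Set (List V → Prop)),
    List.Forall₂ (fun d (p : Bool × Finset V) => d ∈ p.2) l b →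
    (Pre b C l ↔ ∀ k : Fin b.length, (b.get k).1 = false → Pre b C (l.take (k.1 + 1))) := by
  intro l b C h
  induction h generalizing C with
  | nil => simp [Pre]
  | @cons d x l' b' hd _ ih =>
    obtain ⟨q, D⟩ := x
    constructor
    · intro hP k
      obtain ⟨hP1, hP2, hP3⟩ := pre_cons.mp hP
      refine Fin.cases ?_ ?_ k
      · intro hk
        exact pre_cons.mpr ⟨hP1, hP2, pre_nil _ _⟩
      · intro j hj
        exact pre_cons.mpr ⟨hP1, hP2, ((ih _).mp hP3) j hj⟩
    · intro h
      refine pre_cons.mpr ⟨hd, ?_, ?_⟩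
      · intro hq
        subst hq
        exact (pre_cons.mp (h ⟨0, Nat.succ_pos _⟩ rfl)).2.1 rfl
      · refine (ih _).mpr ?_
        intro j hj
        exact (pre_cons.mp (h j.succ hj)).2.2

def guardSet {V : Type} [DecidableEq V] (b : List (Bool × Finset V))
    (C : Set (List V → Prop)) (k : Fin b.length) : Set (V × GTree (tdoms b k.1)) :=
  {p | ∃ pre, branchesG p.2 = {pre} ∧ pre.length = k.1 ∧ Pre b C (pre ++ [p.1])}

lemma mem_guardSet {V : Type} [DecidableEq V] {b : List (Bool × Finset V)}
    {C : Set (List V → Prop)} {k : Fin b.length} {p : V × GTree (tdoms b k.1)} :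
    p ∈ guardSet b C k ↔
      ∃ pre, branchesG p.2 = {pre} ∧ pre.length = k.1 ∧ Pre b C (pre ++ [p.1]) :=
  Iff.rfl

lemma guards_compatible {V : Type} [DecidableEq V] (b : List (Bool × Finset V))
    (C : Set (List V → Prop)) (hA : AdmitsWinning b C)
    (hU : ∀ D : Finset V, (true, D) ∈ b → D.Nonempty) :
    ∃ B : QBase V b, Compatible B C := by
  let G : ∀ k : Fin b.length, (b.get k).1 = false → Set (V × GTree (tdoms b k.1)) :=
    fun k _ => guardSet b C k
  have hUnion : ∀ (k : Fin b.length) (hk : (b.get k).1 = false),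
      (⋃ p ∈ G k hk, IntG p.1 p.2) =
      {x : List V | ∃ v pre, x = v :: pre ∧ pre.length = k.1 ∧ Pre b C (pre ++ [v])} := by
    intro k hk
    ext x
    simp only [Set.mem_iUnion, Set.mem_setOf_eq, IntG, Set.mem_image]
    constructor
    · rintro ⟨⟨v, T⟩, hmem, t, ht, rfl⟩
      obtain ⟨pre, hbr, hlen, hPre⟩ := mem_guardSet.mp hmem
      rw [hbr, Set.mem_singleton_iff] at ht
      subst ht
      exact ⟨v, t, rfl, hlen, hPre⟩
    · rintro ⟨v, pre, rfl, hlen, hPre⟩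
      obtain ⟨hF, -, -⟩ := pre_concat hPre
      rw [hlen] at hF
      obtain ⟨T, hT⟩ := exists_path_tree hF
      exact ⟨⟨v, T⟩, mem_guardSet.mpr ⟨pre, hT, hlen, hPre⟩, pre, by rw [hT]; rfl, rfl⟩
  have hne : ∀ (k : Fin b.length) (hk : (b.get k).1 = false), (G k hk).Nonempty := by
    intro k hk
    obtain ⟨p, hp, hPre⟩ := exists_pre (k.1 + 1) b C k.2 hU hA
    have hpne : p ≠ [] := by intro h; rw [h] at hp; simp at hp
    have hsplit : p.dropLast ++ [p.getLast hpne] = p := List.dropLast_append_getLast hpne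
    rw [← hsplit] at hPre
    have hlen : p.dropLast.length = k.1 := by
      rw [List.length_dropLast, hp]; rfl
    obtain ⟨hF, -, -⟩ := pre_concat hPre
    rw [hlen] at hF
    obtain ⟨T, hT⟩ := exists_path_tree hF
    exact ⟨⟨p.getLast hpne, T⟩, mem_guardSet.mpr ⟨p.dropLast, hT, hlen, hPre⟩⟩
  have hdom : ∀ (k : Fin b.length) (hk : (b.get k).1 = false),
      ∀ p ∈ G k hk, p.1 ∈ (b.get k).2 := by
    intro k hk p hp
    obtain ⟨pre, -, hlen, hPre⟩ := mem_guardSet.mp hp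
    obtain ⟨-, hlt, hv⟩ := pre_concat hPre
    have : (⟨pre.length, hlt⟩ : Fin b.length) = k := Fin.ext hlen
    rwa [this] at hv
  refine ⟨.guards G hne hdom, fun s => ?_⟩
  show Winning (tableC b G) s ↔ Winning C s
  rw [← winning_iff_pre s C hA]
  have key : ∀ l ∈ scenariosF s, ((∀ c ∈ tableC b G, c l) ↔ Pre b C l) := by
    intro l hl
    have hf := scenario_forall2 s l hl
    have hlen : l.length = b.length := hf.length_eq
    rw [pre_iff_forall C hf]
    have hpoint : ∀ (k : Fin b.length) (hk : (b.get k).1 = false),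
        ((∃ v, l[k.1]? = some v ∧ (v :: l.take k.1) ∈ ⋃ p ∈ G k hk, IntG p.1 p.2) ↔
          Pre b C (l.take (k.1 + 1))) := by
      intro k hk
      have hklt : k.1 < l.length := by rw [hlen]; exact k.2
      have hget : l[k.1]? = some (l.get ⟨k.1, hklt⟩) := List.getElem?_eq_getElem hklt
      have htake : l.take k.1 ++ [l.get ⟨k.1, hklt⟩] = l.take (k.1 + 1) := by
        simpa [List.concat_eq_append, List.get_eq_getElem] using List.take_concat_get l k.1 hklt
      have htlen : (l.take k.1).length = k.1 := by
        rw [List.length_take]; exact Nat.min_eq_left (le_of_lt hklt)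
      rw [hUnion k hk]
      constructor
      · rintro ⟨v, hv, hmem⟩
        rw [hget, Option.some_inj] at hv
        subst hv
        obtain ⟨v', pre, heq, hplen, hPre⟩ := hmem
        obtain ⟨rfl, rfl⟩ : v' = l.get ⟨k.1, hklt⟩ ∧ pre = l.take k.1 :=
          ⟨(List.cons.injEq _ _ _ _ ▸ heq).1.symm, ((List.cons.injEq _ _ _ _ ▸ heq).2).symm⟩
        rwa [htake] at hPre
      · intro hPre
        refine ⟨l.get ⟨k.1, hklt⟩, hget, l.get ⟨k.1, hklt⟩, l.take k.1, rfl, htlen, ?_⟩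
        rwa [htake]
    constructor
    · intro h k hk
      exact (hpoint k hk).mp (h _ ⟨k, hk, rfl⟩)
    · intro h c hc
      obtain ⟨k, hk, rfl⟩ := hc
      exact (hpoint k hk).mpr (h k hk)
  constructor
  · intro h l hl
    exact (key l hl).mp (h l hl)
  · intro h l hl c hc
    exact (key l hl).mpr (h l hl) c hc

/-- Completeness: for every QCSP there exists a compatible QCSP base. -/
theorem compatible_base_exists {V : Type} [DecidableEq V]
    (b : List (Bool × Finset V)) (C : Set (List V → Prop)) :
    ∃ B : QBase V b, Compatible B C := by
  by_cases h1 : ∀ s : Strat b, Winning C s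
  · exact ⟨.top, fun s => ⟨fun _ => h1 s, fun _ => trivial⟩⟩
  by_cases h2 : AdmitsWinning b C
  · push_neg at h1
    obtain ⟨s₁, hs₁⟩ := h1
    have hU : ∀ D : Finset V, (true, D) ∈ b → D.Nonempty := by
      intro D hD
      rcases D.eq_empty_or_nonempty with rfl | h
      · exfalso
        apply hs₁
        intro sc hsc c hc
        rw [scenarios_empty s₁ hD] at hsc
        exact absurd hsc (Finset.notMem_empty sc)
      · exact h
    exact guards_compatible b C h2 hU
  · exact ⟨.bot, fun s => ⟨False.elim, fun hw => h2 ⟨s, hw⟩⟩⟩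

end Aux
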